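/- Let A be a finite set of ABox assertions whose induced graph (one node per individual, one undirected edge between x and y for each role assertion R(x,y)) is a tree rooted at an individual x. Define rollup(u) for each node u recursively as the conjunction of every concept C such that C(u) ∈ A, together with ∃R.rollup(v) for each child v of u connected by an assertion R(u,v) ∈ A and ∃R⁻.rollup(v) for each child v of u connected by an assertion R(v,u) ∈ A, where the empty conjunction is ⊤. Then for every TBox T, the ontology (T, A) ⊨ rollup(x)(x). -/
import Mathlib


/-- A role is either a role name or the inverse of a role name. -/
inductive DLRole (R : Type) : Type where
  | atomic : R → DLRole R
  | inv : R → DLRole R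

/-- The inverse of a role. -/
def DLRole.invert {R : Type} : DLRole R → DLRole R
  | .atomic r => .inv r
  | .inv r => .atomic r

/-- DL concepts over atomic concepts `C`, role names `R`, individual names `Ind`. -/
inductive DLConcept (C R Ind : Type) : Type where
  | atomic : C → DLConcept C R Ind
  | nominal : Ind → DLConcept C R Ind
  | top : DLConcept C R Ind
  | bot : DLConcept C R Ind
  | neg : DLConcept C R Ind → DLConcept C R Ind
  | conj : DLConcept C R Ind → DLConcept C R Ind → DLConcept C R Ind
  | disj : DLConcept C R Ind → DLConcept C R Ind → DLConcept C R Ind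
  | ex : DLRole R → DLConcept C R Ind → DLConcept C R Ind
  | all : DLRole R → DLConcept C R Ind → DLConcept C R Ind

/-- A DL interpretation. -/
structure DLInterp (C R Ind : Type) : Type 1 where
  Δ : Type
  nonempty : Nonempty Δ
  conceptI : C → Set Δ
  roleI : R → Set (Δ × Δ)
  indI : Ind → Δ

/-- Interpretation of a (possibly inverse) role. -/
def DLInterp.role {C R Ind : Type} (I : DLInterp C R Ind) : DLRole R → Set (I.Δ × I.Δ)
  | .atomic r => I.roleI r
  | .inv r => {p | (p.2, p.1) ∈ I.roleI r}

/-- Interpretation of a concept. -/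
def DLInterp.concept {C R Ind : Type} (I : DLInterp C R Ind) : DLConcept C R Ind → Set I.Δ
  | .atomic A => I.conceptI A
  | .nominal o => {I.indI o}
  | .top => Set.univ
  | .bot => ∅
  | .neg c => (I.concept c)ᶜ
  | .conj c d => I.concept c ∩ I.concept d
  | .disj c d => I.concept c ∪ I.concept d
  | .ex r c => {x | ∃ y, (x, y) ∈ I.role r ∧ y ∈ I.concept c}
  | .all r c => {x | ∀ y, (x, y) ∈ I.role r → y ∈ I.concept c}

/-- TBox axioms: GCIs, role inclusions, transitivity declarations. -/
inductive DLAxiom (C R Ind : Type) : Type where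
  | gci : DLConcept C R Ind → DLConcept C R Ind → DLAxiom C R Ind
  | roleIncl : DLRole R → DLRole R → DLAxiom C R Ind
  | transRole : R → DLAxiom C R Ind

/-- ABox assertions. -/
inductive DLAssertion (C R Ind : Type) : Type where
  | conceptAssert : DLConcept C R Ind → Ind → DLAssertion C R Ind
  | roleAssert : DLRole R → Ind → Ind → DLAssertion C R Ind

/-- Satisfaction of a TBox axiom. -/
def DLInterp.satAxiom {C R Ind : Type} (I : DLInterp C R Ind) : DLAxiom C R Ind → Prop
  | .gci c d => I.concept c ⊆ I.concept d
  | .roleIncl r s => I.role r ⊆ I.role s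
  | .transRole r => ∀ x y z : I.Δ, (x, y) ∈ I.roleI r → (y, z) ∈ I.roleI r → (x, z) ∈ I.roleI r

/-- Satisfaction of an ABox assertion. -/
def DLInterp.satAssertion {C R Ind : Type} (I : DLInterp C R Ind) : DLAssertion C R Ind → Prop
  | .conceptAssert c a => I.indI a ∈ I.concept c
  | .roleAssert r a b => (I.indI a, I.indI b) ∈ I.role r

/-- An ontology: a TBox and an ABox. -/
structure DLOntology (C R Ind : Type) : Type where
  tbox : Set (DLAxiom C R Ind)
  abox : Set (DLAssertion C R Ind)

/-- `I` is a model of `K`. -/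
def DLInterp.isModel {C R Ind : Type} (I : DLInterp C R Ind) (K : DLOntology C R Ind) : Prop :=
  (∀ ax ∈ K.tbox, I.satAxiom ax) ∧ (∀ asr ∈ K.abox, I.satAssertion asr)

/-- `K ⊨ α` for an assertion `α`. -/
def DLOntology.entails {C R Ind : Type} (K : DLOntology C R Ind) (α : DLAssertion C R Ind) : Prop :=
  ∀ I : DLInterp C R Ind, I.isModel K → I.satAssertion α

/-- `K ⊨ c ⊑ d`. -/
def DLOntology.entailsGCI {C R Ind : Type} (K : DLOntology C R Ind) (c d : DLConcept C R Ind) : Prop :=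
  ∀ I : DLInterp C R Ind, I.isModel K → I.concept c ⊆ I.concept d

/-- `T ⊨ c ⊑ d` for a TBox `T`. -/
def tboxEntailsGCI {C R Ind : Type} (T : Set (DLAxiom C R Ind)) (c d : DLConcept C R Ind) : Prop :=
  ∀ I : DLInterp C R Ind, (∀ ax ∈ T, I.satAxiom ax) → I.concept c ⊆ I.concept d

/-- A finite tree of ABox assertions: each node is an individual `x` carrying the concepts
`C` with `C(x) ∈ A`, and for each child `v` an edge labelled by a role name `r` together
with a direction flag (`true` for an assertion `r(x,v)`, `false` for `r(v,x)`). -/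
inductive ATree (C R Ind : Type) : Type where
  | node : Ind → List (DLConcept C R Ind) → List (R × Bool × ATree C R Ind) → ATree C R Ind

/-- The root individual of the tree. -/
def ATree.root {C R Ind : Type} : ATree C R Ind → Ind
  | .node x _ _ => x

mutual
/-- The rolling-up of a tree of assertions: the conjunction of all asserted concepts of the
root together with `∃r.rollup(v)` (resp. `∃r⁻.rollup(v)`) for each child `v` reached by an
assertion `r(x,v)` (resp. `r(v,x)`); the empty conjunction is `⊤`. -/
def ATree.rollup {C R Ind : Type} : ATree C R Ind → DLConcept C R Ind
  | .node _ cs ch => .conj (cs.foldr .conj .top) (rollupEdges ch)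

def rollupEdges {C R Ind : Type} : List (R × Bool × ATree C R Ind) → DLConcept C R Ind
  | [] => .top
  | (r, fwd, t) :: rest =>
      .conj (.ex (if fwd then .atomic r else .inv r) t.rollup) (rollupEdges rest)
end

mutual
/-- The set of ABox assertions represented by the tree. -/
def ATree.assertions {C R Ind : Type} : ATree C R Ind → Set (DLAssertion C R Ind)
  | .node x cs ch =>
      {a | (∃ c ∈ cs, a = .conceptAssert c x) ∨ a ∈ edgeAssertions x ch}

def edgeAssertions {C R Ind : Type} : Ind → List (R × Bool × ATree C R Ind) →
    Set (DLAssertion C R Ind)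
  | _, [] => ∅
  | x, (r, fwd, t) :: rest =>
      {a | a = (if fwd then DLAssertion.roleAssert (.atomic r) x t.root
                else DLAssertion.roleAssert (.atomic r) t.root x)
            ∨ a ∈ t.assertions ∨ a ∈ edgeAssertions x rest}
end

mutual
/-- The list of all individuals (nodes) occurring in the tree. -/
def ATree.inds {C R Ind : Type} : ATree C R Ind → List Ind
  | .node x _ ch => x :: edgeInds ch

def edgeInds {C R Ind : Type} : List (R × Bool × ATree C R Ind) → List Ind
  | [] => []
  | (_, _, t) :: rest => t.inds ++ edgeInds rest
end

lemma foldr_conj_mem {C R Ind : Type} (I : DLInterp C R Ind) (x : I.Δ)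
    (cs : List (DLConcept C R Ind)) (h : ∀ c ∈ cs, x ∈ I.concept c) :
    x ∈ I.concept (cs.foldr .conj .top) := by
  induction cs with
  | nil => exact Set.mem_univ x
  | cons c cs ih =>
      exact ⟨h c (by simp), ih (fun c hc => h c (by simp [hc]))⟩

mutual
theorem rollup_mem {C R Ind : Type} (I : DLInterp C R Ind) (t : ATree C R Ind)
    (h : ∀ a ∈ t.assertions, I.satAssertion a) :
    I.indI t.root ∈ I.concept t.rollup := by
  cases t with
  | node x cs ch =>
      refine ⟨foldr_conj_mem I (I.indI x) cs (fun c hc => ?_), ?_⟩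
      · exact h (.conceptAssert c x) (Or.inl ⟨c, hc, rfl⟩)
      · exact edges_mem I x ch (fun a ha => h a (Or.inr ha))

theorem edges_mem {C R Ind : Type} (I : DLInterp C R Ind) (x : Ind)
    (ch : List (R × Bool × ATree C R Ind))
    (h : ∀ a ∈ edgeAssertions x ch, I.satAssertion a) :
    I.indI x ∈ I.concept (rollupEdges ch) := by
  cases ch with
  | nil => exact Set.mem_univ _
  | cons e rest =>
      obtain ⟨r, fwd, t⟩ := e
      refine ⟨⟨I.indI t.root, ?_, rollup_mem I t (fun a ha => h a (Or.inr (Or.inl ha)))⟩,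
        edges_mem I x rest (fun a ha => h a (Or.inr (Or.inr ha)))⟩
      have := h _ (Or.inl rfl)
      cases fwd with
      | true => simpa [DLInterp.satAssertion, DLInterp.role] using this
      | false => simpa [DLInterp.satAssertion, DLInterp.role] using this
end

/-- if the graph induced by a finite set of ABox assertions is a tree rooted at
`x` (encoded by `t` with pairwise distinct nodes), then for every TBox `T`,
`(T, A) ⊨ rollup(x)(x)`. -/
theorem rollup_sound {C R Ind : Type} (t : ATree C R Ind)
    (htree : t.inds.Nodup) (T : Set (DLAxiom C R Ind)) :
    (DLOntology.mk T t.assertions).entails (.conceptAssert t.rollup t.root) := by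
  intro I hI
  exact rollup_mem I t (fun a ha => hI.2 a ha)
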